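/- Let 1, θ₁, θ₂ be linearly independent over ℚ and let (m_ν)_{ν≥1} be the sequence of best approximation vectors ordered so that M_ν = √(max(|m_{ν,1}|, |m_{ν,2}|²)) is strictly increasing. Then for every ν, ζ_ν · M_{ν+1}³ ≤ 1, where ζ_ν = ‖θ₁ m_{ν,1} + θ₂ m_{ν,2}‖. -/

import Mathlib

/-!
Suppose `ζ_ν M_{ν+1}³ > 1` and put `n = M_{ν+1}²`, an integer. The box principle applied to the
`n (⌊√(n-1)⌋ + 1)` vectors with `0 ≤ x₁ ≤ n - 1`, `0 ≤ x₂ ≤ √(n-1)` gives a nonzero `r` with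
`max(|r₁|, r₂²) < n` and `ζ(r) ≤ n^{-3/2} < ζ_ν`; this replaces Minkowski's theorem. Minimising `ζ`
over the finitely many nonzero vectors no larger than `r` produces a best approximation `y`, which by
completeness of the sequence is `±m_μ`. Since `M_μ < M_{ν+1}` we get `μ ≤ ν`, so `m_μ` lies in the
box of `m_ν` while `ζ(m_μ) < ζ_ν`, contradicting the minimality of `m_ν`.
-/

open scoped BigOperators

/-- Distance from a real number to the nearest integer. -/
noncomputable def dni (x : ℝ) : ℝ := |x - round x|

/-- `1, θ₁, θ₂` are linearly independent over `ℚ` (equivalently over `ℤ`). -/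
def LinIndep (θ₁ θ₂ : ℝ) : Prop :=
  ∀ a b c : ℤ, (a : ℝ) + (b : ℝ) * θ₁ + (c : ℝ) * θ₂ = 0 → a = 0 ∧ b = 0 ∧ c = 0

/-- The weighted size `max(|m₁|, |m₂|²)` of an integer vector. -/
noncomputable def wsize (m : ℤ × ℤ) : ℝ := max |(m.1 : ℝ)| ((m.2 : ℝ) ^ 2)

/-- The value of the linear form `‖θ₁ m₁ + θ₂ m₂‖`. -/
noncomputable def zeta (θ₁ θ₂ : ℝ) (m : ℤ × ℤ) : ℝ := dni (θ₁ * m.1 + θ₂ * m.2)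

/-- `M = √(max(|m₁|, |m₂|²))`. -/
noncomputable def Mval (m : ℤ × ℤ) : ℝ := Real.sqrt (wsize m)

/-- `m = (m₁, m₂)` is a best approximation vector for `(θ₁, θ₂)` w.r.t. the
weighted norm `max(|x₁|, |x₂|²)`. -/
def IsBestApprox (θ₁ θ₂ : ℝ) (m : ℤ × ℤ) : Prop :=
  m ≠ 0 ∧ ∃ m₀ : ℤ,
    |(m₀ : ℝ) + θ₁ * m.1 + θ₂ * m.2| = zeta θ₁ θ₂ m ∧
    ∀ x₀ x₁ x₂ : ℤ,
      max |(x₁ : ℝ)| ((x₂ : ℝ) ^ 2) ≤ wsize m →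
      |(x₀ : ℝ) + θ₁ * x₁ + θ₂ * x₂| ≤ zeta θ₁ θ₂ m →
      ((x₀, x₁, x₂) = ((0 : ℤ), (0 : ℤ), (0 : ℤ)) ∨
        (x₀, x₁, x₂) = (m₀, m.1, m.2) ∨ (x₀, x₁, x₂) = (-m₀, -m.1, -m.2))

/-- An enumeration `m : ℕ → ℤ × ℤ` of all the best approximation vectors of
`(θ₁, θ₂)`, ordered so that `M_ν` is strictly increasing (each best
approximation appears up to sign). -/
def IsBestApproxSeq (θ₁ θ₂ : ℝ) (m : ℕ → ℤ × ℤ) : Prop :=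
  (∀ ν, IsBestApprox θ₁ θ₂ (m ν)) ∧
  (StrictMono fun ν => Mval (m ν)) ∧
  (∀ p : ℤ × ℤ, IsBestApprox θ₁ θ₂ p → ∃ ν, p = m ν ∨ p = -(m ν))

/-- `(η₁, η₂)` belongs to `BAD^Θ(2/3, 1/3)`. -/
def BADT (θ₁ θ₂ η₁ η₂ : ℝ) : Prop :=
  ∃ c > 0, ∀ q : ℕ, 0 < q →
    c ≤ max ((q : ℝ) ^ ((2 : ℝ) / 3) * dni (q * θ₁ - η₁))
          ((q : ℝ) ^ ((1 : ℝ) / 3) * dni (q * θ₂ - η₂))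

lemma dni_le_abs_sub_intCast (x : ℝ) (n : ℤ) : dni x ≤ |x - n| := round_le x n

lemma dni_le_half (x : ℝ) : dni x ≤ 1 / 2 := abs_sub_round x

lemma dni_neg (x : ℝ) : dni (-x) = dni x := by
  have key (y : ℝ) : dni (-y) ≤ dni y :=
    calc dni (-y) ≤ |-y - ((-round y : ℤ) : ℝ)| := dni_le_abs_sub_intCast _ _
      _ = dni y := by rw [dni, ← abs_neg]; push_cast; ring_nf
  exact le_antisymm (key x) (by simpa using key (-x))

lemma zeta_neg (θ₁ θ₂ : ℝ) (p : ℤ × ℤ) : zeta θ₁ θ₂ (-p) = zeta θ₁ θ₂ p := by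
  rw [zeta, zeta, ← dni_neg]
  simp only [Prod.fst_neg, Prod.snd_neg]
  push_cast
  ring_nf

lemma abs_neg_round_add_eq_zeta (θ₁ θ₂ : ℝ) (p : ℤ × ℤ) :
    |((-round (θ₁ * p.1 + θ₂ * p.2) : ℤ) : ℝ) + θ₁ * p.1 + θ₂ * p.2| = zeta θ₁ θ₂ p := by
  rw [zeta, dni]
  congr 1
  push_cast
  ring

lemma zeta_sub_le_abs_fract_sub (θ₁ θ₂ : ℝ) (p q : ℤ × ℤ) :
    zeta θ₁ θ₂ (p - q) ≤
      |Int.fract (θ₁ * p.1 + θ₂ * p.2) - Int.fract (θ₁ * q.1 + θ₂ * q.2)| := by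
  refine (dni_le_abs_sub_intCast _ (⌊θ₁ * p.1 + θ₂ * p.2⌋ - ⌊θ₁ * q.1 + θ₂ * q.2⌋)).trans_eq ?_
  simp only [Int.fract, Prod.fst_sub, Prod.snd_sub]
  push_cast
  ring_nf

lemma zeta_le_one_sub_fract (θ₁ θ₂ : ℝ) (p : ℤ × ℤ) :
    zeta θ₁ θ₂ p ≤ 1 - Int.fract (θ₁ * p.1 + θ₂ * p.2) :=
  (abs_sub_round_eq_min _).trans_le (min_le_right _ _)

lemma wsize_neg (p : ℤ × ℤ) : wsize (-p) = wsize p := by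
  simp [wsize]

lemma wsize_nonneg (p : ℤ × ℤ) : 0 ≤ wsize p :=
  (abs_nonneg _).trans (le_max_left _ _)

lemma wsize_eq_natCast (p : ℤ × ℤ) :
    wsize p = ((max p.1.natAbs (p.2.natAbs ^ 2) : ℕ) : ℝ) := by
  simp [wsize]

lemma Mval_le_Mval_iff {p q : ℤ × ℤ} : Mval p ≤ Mval q ↔ wsize p ≤ wsize q :=
  Real.sqrt_le_sqrt_iff (wsize_nonneg q)

lemma Mval_lt_Mval_iff {p q : ℤ × ℤ} : Mval p < Mval q ↔ wsize p < wsize q :=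
  Real.sqrt_lt_sqrt_iff (wsize_nonneg p)

lemma finite_setOf_wsize_le (c : ℝ) : {p : ℤ × ℤ | wsize p ≤ c}.Finite := by
  refine (Set.finite_Icc (-⌈c⌉, -⌈c⌉) (⌈c⌉, ⌈c⌉)).subset fun p (hp : wsize p ≤ c) => ?_
  have h₁ : |(p.1 : ℝ)| ≤ ⌈c⌉ := ((le_max_left _ _).trans hp).trans (Int.le_ceil c)
  have h₂ : (p.2 : ℝ) ^ 2 ≤ ⌈c⌉ := ((le_max_right _ _).trans hp).trans (Int.le_ceil c)
  rw [abs_le] at h₁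
  norm_cast at h₁ h₂
  exact ⟨⟨h₁.1, by nlinarith⟩, ⟨h₁.2, by nlinarith⟩⟩

lemma LinIndep.eq_or_eq_neg_of_abs_eq {θ₁ θ₂ : ℝ} (h : LinIndep θ₁ θ₂) {a₀ a₁ a₂ b₀ b₁ b₂ : ℤ}
    (hab : |(a₀ : ℝ) + θ₁ * a₁ + θ₂ * a₂| = |(b₀ : ℝ) + θ₁ * b₁ + θ₂ * b₂|) :
    (a₀, a₁, a₂) = (b₀, b₁, b₂) ∨ (a₀, a₁, a₂) = (-b₀, -b₁, -b₂) := by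
  simp only [Prod.mk.injEq]
  rcases abs_eq_abs.1 hab with hab | hab
  · obtain ⟨h₀, h₁, h₂⟩ := h (a₀ - b₀) (a₁ - b₁) (a₂ - b₂) (by push_cast; linarith)
    omega
  · obtain ⟨h₀, h₁, h₂⟩ := h (a₀ + b₀) (a₁ + b₁) (a₂ + b₂) (by push_cast; linarith)
    omega

lemma IsBestApprox.zeta_le {θ₁ θ₂ : ℝ} {m x : ℤ × ℤ} (hm : IsBestApprox θ₁ θ₂ m) (hx : x ≠ 0)
    (hxm : wsize x ≤ wsize m) : zeta θ₁ θ₂ m ≤ zeta θ₁ θ₂ x := by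
  by_contra! hlt
  obtain ⟨-, m₀, -, hmin⟩ := hm
  rcases hmin _ x.1 x.2 hxm ((abs_neg_round_add_eq_zeta θ₁ θ₂ x).trans_le hlt.le) with
    h | h | h <;> simp only [Prod.mk.injEq] at h
  · exact hx (Prod.ext h.2.1 h.2.2)
  · rw [show x = m from Prod.ext h.2.1 h.2.2] at hlt
    exact hlt.false
  · rw [show x = -m from Prod.ext h.2.1 h.2.2, zeta_neg] at hlt
    exact hlt.false

lemma isBestApprox_of_forall_zeta_le {θ₁ θ₂ : ℝ} (h : LinIndep θ₁ θ₂) {y : ℤ × ℤ} (hy : y ≠ 0)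
    (hmin : ∀ x : ℤ × ℤ, x ≠ 0 → wsize x ≤ wsize y → zeta θ₁ θ₂ y ≤ zeta θ₁ θ₂ x) :
    IsBestApprox θ₁ θ₂ y := by
  refine ⟨hy, -round (θ₁ * y.1 + θ₂ * y.2), abs_neg_round_add_eq_zeta θ₁ θ₂ y,
    fun x₀ x₁ x₂ hx hxζ => ?_⟩
  by_cases hx0 : (x₁, x₂) = (0 : ℤ × ℤ)
  · obtain ⟨rfl, rfl⟩ := Prod.mk_eq_zero.1 hx0
    have hx₀ : |(x₀ : ℝ)| < 1 := by
      simpa using hxζ.trans_lt ((dni_le_half _).trans_lt (by norm_num))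
    left
    simp [Int.abs_lt_one_iff.1 (by exact_mod_cast hx₀)]
  · right
    have hζ : zeta θ₁ θ₂ y ≤ |(x₀ : ℝ) + θ₁ * x₁ + θ₂ * x₂| :=
      (hmin _ hx0 hx).trans <| (dni_le_abs_sub_intCast _ (-x₀)).trans_eq <| by
        congr 1; push_cast; ring
    exact h.eq_or_eq_neg_of_abs_eq
      ((le_antisymm hxζ hζ).trans (abs_neg_round_add_eq_zeta θ₁ θ₂ y).symm)

lemma exists_isBestApprox_wsize_le_zeta_le {θ₁ θ₂ : ℝ} (h : LinIndep θ₁ θ₂) {r : ℤ × ℤ}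
    (hr : r ≠ 0) :
    ∃ y, IsBestApprox θ₁ θ₂ y ∧ wsize y ≤ wsize r ∧ zeta θ₁ θ₂ y ≤ zeta θ₁ θ₂ r := by
  obtain ⟨y, ⟨hy0, hyr⟩, hymin⟩ :=
    Set.exists_min_image {x : ℤ × ℤ | x ≠ 0 ∧ wsize x ≤ wsize r} (zeta θ₁ θ₂)
      ((finite_setOf_wsize_le _).subset fun x hx => hx.2) ⟨r, hr, le_rfl⟩
  exact ⟨y, isBestApprox_of_forall_zeta_le h hy0 fun x hx hxy => hymin x ⟨hx, hxy.trans hyr⟩,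
    hyr, hymin r ⟨hr, le_rfl⟩⟩

lemma exists_ne_abs_sub_le_of_card_lt {ι : Type*} {s : Finset ι} {f : ι → ℝ} {N : ℕ}
    (hN : 0 < N) (hs : N < s.card) (hf : ∀ i ∈ s, f i ∈ Set.Icc (0 : ℝ) 1) :
    ∃ i ∈ s, ∃ j ∈ s, i ≠ j ∧ |f i - f j| ≤ 1 / N := by
  have hN' : (0 : ℝ) < N := by exact_mod_cast hN
  -- the boxes `[k/N, (k+1)/N]` for `k < N`, the last one closed so that `1` is covered
  let g : ι → ℤ := fun i => min ⌊N * f i⌋ (N - 1)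
  have hg : ∀ i ∈ s, (g i : ℝ) ≤ N * f i ∧ N * f i ≤ g i + 1 := by
    intro i hi
    obtain ⟨h0, h1⟩ := hf i hi
    dsimp only [g]
    rcases min_cases ⌊N * f i⌋ ((N : ℤ) - 1) with ⟨he, -⟩ | ⟨he, hlt⟩ <;> rw [he]
    · exact ⟨Int.floor_le _, (Int.lt_floor_add_one _).le⟩
    · have : (N - 1 : ℝ) < ⌊N * f i⌋ := by exact_mod_cast hlt
      push_cast
      constructor <;> nlinarith [Int.floor_le (N * f i)]
  have hmaps : Set.MapsTo g s (Finset.Ico 0 (N : ℤ)) := fun i hi => by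
    have : 0 ≤ ⌊N * f i⌋ := Int.floor_nonneg.2 (mul_nonneg hN'.le (hf i hi).1)
    simp only [Finset.coe_Ico, Set.mem_Ico, g]
    omega
  obtain ⟨i, hi, j, hj, hij, hgij⟩ :=
    Finset.exists_ne_map_eq_of_card_lt_of_maps_to (by simpa using hs) hmaps
  refine ⟨i, hi, j, hj, hij, ?_⟩
  rw [le_div_iff₀ hN', ← abs_of_pos hN', ← abs_mul, abs_le]
  obtain ⟨hi₁, hi₂⟩ := hg i hi
  obtain ⟨hj₁, hj₂⟩ := hg j hj
  rw [hgij] at hi₁ hi₂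
  constructor <;> linarith

lemma exists_zeta_mul_le_one (θ₁ θ₂ : ℝ) {a₁ a₂ : ℕ} (ha : 0 < a₁ + a₂) :
    ∃ r : ℤ × ℤ, r ≠ 0 ∧ |r.1| ≤ a₁ ∧ |r.2| ≤ a₂ ∧
      zeta θ₁ θ₂ r * ((a₁ + 1) * (a₂ + 1) : ℕ) ≤ 1 := by
  set N := (a₁ + 1) * (a₂ + 1)
  have hN : (2 : ℝ) ≤ N := by
    have : 2 ≤ N := by simp only [N]; nlinarith
    exact_mod_cast this
  suffices ∃ r : ℤ × ℤ, r ≠ 0 ∧ |r.1| ≤ a₁ ∧ |r.2| ≤ a₂ ∧ zeta θ₁ θ₂ r ≤ 1 / N by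
    simpa only [le_div_iff₀ (by positivity : (0 : ℝ) < N)] using this
  let D : Finset (ℤ × ℤ) := Finset.Icc 0 (a₁ : ℤ) ×ˢ Finset.Icc 0 (a₂ : ℤ)
  have hD : D.card = N := by simp [D, N]
  let t : ℤ × ℤ → ℝ := fun p => Int.fract (θ₁ * p.1 + θ₂ * p.2)
  -- `N + 1` points of `[0, 1]`: the fractional parts of `θ₁ p₁ + θ₂ p₂` over the box, and `1`
  obtain ⟨i, hi, j, hj, hij, hfij⟩ :=
    exists_ne_abs_sub_le_of_card_lt (s := D.insertNone) (f := fun o => o.elim 1 t) (N := N)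
      (by positivity) (by simp [hD]) (by
        rintro (_ | p) - <;> simp [t, Int.fract_nonneg, (Int.fract_lt_one _).le])
  have of_extra : ∀ q ∈ D, |1 - t q| ≤ 1 / N →
      ∃ r : ℤ × ℤ, r ≠ 0 ∧ |r.1| ≤ a₁ ∧ |r.2| ≤ a₂ ∧ zeta θ₁ θ₂ r ≤ 1 / N := by
    intro q hq hfq
    simp only [D, Finset.mem_product, Finset.mem_Icc] at hq
    refine ⟨q, ?_, abs_le.2 ⟨by omega, by omega⟩, abs_le.2 ⟨by omega, by omega⟩,
      (zeta_le_one_sub_fract θ₁ θ₂ q).trans ((le_abs_self _).trans hfq)⟩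
    rintro rfl
    have : (1 : ℝ) ≤ 1 / N := by simpa [t] using hfq
    rw [le_div_iff₀ (by positivity)] at this
    linarith
  rcases i with _ | p <;> rcases j with _ | q <;> simp only [Finset.mem_insertNone,
    Option.mem_def, Option.some.injEq, forall_eq'] at hi hj
  · exact absurd rfl hij
  · exact of_extra q hj hfij
  · exact of_extra p hi (by rwa [abs_sub_comm] at hfij)
  · simp only [D, Finset.mem_product, Finset.mem_Icc] at hi hj
    refine ⟨p - q, sub_ne_zero.2 fun h => hij (h ▸ rfl), abs_le.2 ⟨?_, ?_⟩, abs_le.2 ⟨?_, ?_⟩,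
      (zeta_sub_le_abs_fract_sub θ₁ θ₂ p q).trans hfij⟩ <;>
    simp only [Prod.fst_sub, Prod.snd_sub] <;> omega

lemma exists_wsize_lt_zeta_mul_sqrt_pow_three_le (θ₁ θ₂ : ℝ) {n : ℕ} (hn : 2 ≤ n) :
    ∃ r : ℤ × ℤ, r ≠ 0 ∧ wsize r < n ∧ zeta θ₁ θ₂ r * √n ^ 3 ≤ 1 := by
  set k := Nat.sqrt (n - 1)
  obtain ⟨r, hr0, hr₁, hr₂, hrζ⟩ := exists_zeta_mul_le_one θ₁ θ₂ (a₁ := n - 1) (a₂ := k) (by omega)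
  rw [Nat.sub_add_cancel (by omega : 1 ≤ n)] at hrζ
  have hk : (k : ℤ) ^ 2 < n := by exact_mod_cast (Nat.sqrt_le' (n - 1)).trans_lt (by omega)
  have hsqrt : √n ≤ k + 1 := by
    rw [Real.sqrt_le_left (by positivity)]
    have : n - 1 < (k + 1) ^ 2 := Nat.lt_succ_sqrt' (n - 1)
    exact_mod_cast (by omega : n ≤ (k + 1) ^ 2)
  refine ⟨r, hr0, max_lt ?_ ?_, ?_⟩
  · exact_mod_cast (show |r.1| < n by omega)
  · exact_mod_cast (show r.2 ^ 2 < n from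
      (sq_abs r.2 ▸ pow_le_pow_left₀ (abs_nonneg _) hr₂ 2).trans_lt hk)
  · calc zeta θ₁ θ₂ r * √n ^ 3 = zeta θ₁ θ₂ r * (n * √n) := by
          rw [pow_succ, Real.sq_sqrt (by positivity)]
      _ ≤ zeta θ₁ θ₂ r * (n * (k + 1)) := mul_le_mul_of_nonneg_left (by gcongr) (abs_nonneg _)
      _ ≤ 1 := by exact_mod_cast hrζ

/-- `ζ_ν · M_{ν+1}³ ≤ 1`. -/
theorem stmt_2 (θ₁ θ₂ : ℝ) (h : LinIndep θ₁ θ₂) (m : ℕ → ℤ × ℤ)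
    (hm : IsBestApproxSeq θ₁ θ₂ m) (ν : ℕ) :
    zeta θ₁ θ₂ (m ν) * (Mval (m (ν + 1))) ^ 3 ≤ 1 := by
  obtain ⟨hbest, hmono, hall⟩ := hm
  obtain ⟨n, hn⟩ : ∃ n : ℕ, wsize (m (ν + 1)) = n := ⟨_, wsize_eq_natCast _⟩
  have hM : Mval (m (ν + 1)) = √n := by rw [Mval, hn]
  rcases le_or_gt n 1 with hn1 | hn2
  · have hM1 : Mval (m (ν + 1)) ≤ 1 := by rw [hM, Real.sqrt_le_one]; exact_mod_cast hn1
    have hM0 : 0 ≤ Mval (m (ν + 1)) := Real.sqrt_nonneg _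
    exact mul_le_one₀ ((dni_le_half _).trans (by norm_num)) (pow_nonneg hM0 3)
      (pow_le_one₀ hM0 hM1)
  by_contra! hlt
  obtain ⟨r, hr0, hrw, hrζ⟩ := exists_wsize_lt_zeta_mul_sqrt_pow_three_le θ₁ θ₂ hn2
  obtain ⟨y, hy, hyr, hyζ⟩ := exists_isBestApprox_wsize_le_zeta_le h hr0
  obtain ⟨μ, hμ⟩ := hall y hy
  have hμy : wsize (m μ) = wsize y ∧ zeta θ₁ θ₂ (m μ) = zeta θ₁ θ₂ y := by
    rcases hμ with rfl | rfl <;> simp [wsize_neg, zeta_neg]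
  have hμν : μ ≤ ν := Nat.lt_succ_iff.1 <| hmono.lt_iff_lt.1 <|
    Mval_lt_Mval_iff.2 (by linarith [hμy.1])
  have hνμ : zeta θ₁ θ₂ (m ν) ≤ zeta θ₁ θ₂ (m μ) :=
    (hbest ν).zeta_le (hbest μ).1 (Mval_le_Mval_iff.1 (hmono.monotone hμν))
  rw [hM] at hlt
  have hνr : zeta θ₁ θ₂ (m ν) ≤ zeta θ₁ θ₂ r := hνμ.trans (hμy.2.trans_le hyζ)
  nlinarith [pow_pos (Real.sqrt_pos.2 (by positivity : (0 : ℝ) < n)) 3]
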